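/- arXiv:2212.14577 — 2 statements merged into one kernel-verified Lean document; each statement's English description precedes it below -/
import Mathlib

section
/- Let (t_k) be a sequence of positive reals with t_k → 0, for each k let (x^k,y^k) be a Karush–Kuhn–Tucker point of the Scholtes-type regularization S(t_k), and suppose (x^k,y^k) → (x̄,ȳ) where (x̄,ȳ) is a nondegenerate T-stationary point of the regularized continuous reformulation R. Then for all sufficiently large k it holds N(y^k) ⊆ a10(x̄,ȳ) ⊆ N(y^k) ∪ H(x^k,y^k). -/
open scoped Classical
open Finset Filter Topology

noncomputable section
namespace Scholtes

/-- Vectors in ℝⁿ. -/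
abbrev Vec (n : ℕ) := Fin n → ℝ

variable {n : ℕ} {P Q : Type*} [Fintype P] [Fintype Q]

/-- Euclidean dot product. -/
def dot (u v : Vec n) : ℝ := ∑ i, u i * v i

/-- Gradient: vector of partial derivatives. -/
def grad (f : Vec n → ℝ) (x : Vec n) : Vec n := fun i => fderiv ℝ f x (Pi.single i 1)

/-- Hessian bilinear form of `L` at `z`, evaluated at directions `ξ`, `ζ`. -/
def hess (L : Vec n × Vec n → ℝ) (z ξ ζ : Vec n × Vec n) : ℝ :=
  fderiv ℝ (fun w => fderiv ℝ L w ξ) z ζ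

/-- The pair vector (e_i, 0) ∈ ℝ²ⁿ. -/
def ex (i : Fin n) : Vec n × Vec n := (Pi.single i 1, 0)

/-- The pair vector (0, e_i) ∈ ℝ²ⁿ. -/
def ey (i : Fin n) : Vec n × Vec n := (0, Pi.single i 1)

/-- The pair vector (0, e) ∈ ℝ²ⁿ, where e is the all-ones vector. -/
def eAll : Vec n × Vec n := (0, fun _ => 1)

/-- The pair vector (y_i e_i, x_i e_i) ∈ ℝ²ⁿ. -/
def hvec (x y : Vec n) (i : Fin n) : Vec n × Vec n := (Pi.single i (y i), Pi.single i (x i))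

/-- The number of negative eigenvalues of the bilinear form `B` restricted to the
(sub)space `T`, expressed as the maximal dimension of a linear subspace of `T` on
which the associated quadratic form is negative definite. -/
def negIndex (B : (Vec n × Vec n) → (Vec n × Vec n) → ℝ) (T : (Vec n × Vec n) → Prop) : ℕ :=
  sSup {d : ℕ | ∃ W : Submodule ℝ (Vec n × Vec n),
    (∀ ξ ∈ W, T ξ) ∧ Module.finrank ℝ W = d ∧ ∀ ξ ∈ W, ξ ≠ 0 → B ξ ξ < 0}

/-- The data and standing assumptions of the paper: objective `f`, equality
constraints `h`, inequality constraints `g`, positive pairwise different linear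
coefficients `c`, cardinality bound `s` and regularization parameter `ε`. -/
structure Setting (n : ℕ) (P Q : Type*) [Fintype P] [Fintype Q] where
  f : Vec n → ℝ
  h : P → Vec n → ℝ
  g : Q → Vec n → ℝ
  c : Vec n
  s : ℕ
  ε : ℝ
  hn : 1 ≤ n
  hf : ContDiff ℝ 2 f
  hh : ∀ p, ContDiff ℝ 2 (h p)
  hg : ∀ q, ContDiff ℝ 2 (g q)
  hcpos : ∀ i, 0 < c i
  hcinj : Function.Injective c
  hs : s < n
  hεpos : 0 < ε
  hεle : ε ≤ 1 / ((n : ℝ) - s)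

/-- Index set a01: x̄_i = 0, ȳ_i > 0. -/
def a01 (x y : Vec n) : Finset (Fin n) := univ.filter fun i => x i = 0 ∧ 0 < y i

/-- Index set a10: x̄_i ≠ 0, ȳ_i = 0. -/
def a10 (x y : Vec n) : Finset (Fin n) := univ.filter fun i => x i ≠ 0 ∧ y i = 0

/-- Index set a00: x̄_i = 0, ȳ_i = 0. -/
def a00 (x y : Vec n) : Finset (Fin n) := univ.filter fun i => x i = 0 ∧ y i = 0

/-- Index set N(y): y_i = 0. -/
def Nact (y : Vec n) : Finset (Fin n) := univ.filter fun i => y i = 0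

/-- Index set H≥(x,y): x_i y_i = −t. -/
def Hge (t : ℝ) (x y : Vec n) : Finset (Fin n) := univ.filter fun i => x i * y i = -t

/-- Index set H≤(x,y): x_i y_i = t. -/
def Hle (t : ℝ) (x y : Vec n) : Finset (Fin n) := univ.filter fun i => x i * y i = t

/-- Index set H(x,y) = H≥ ∪ H≤. -/
def Hact (t : ℝ) (x y : Vec n) : Finset (Fin n) := Hge t x y ∪ Hle t x y

/-- Active inequality constraints Q0(x). -/
def Q0 (D : Setting n P Q) (x : Vec n) : Finset Q := univ.filter fun q => D.g q x = 0

/-- Active upper bounds E(y): y_i = 1 + ε. -/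
def Eact (D : Setting n P Q) (y : Vec n) : Finset (Fin n) := univ.filter fun i => y i = 1 + D.ε

/-- Index set O(x,y) = complement of E(y) ∪ N(y) ∪ H(x,y). -/
def Oact (D : Setting n P Q) (t : ℝ) (x y : Vec n) : Finset (Fin n) :=
  (Eact D y ∪ Nact y ∪ Hact t x y)ᶜ

/-- Feasibility for the regularized continuous reformulation R. -/
def feasR (D : Setting n P Q) (x y : Vec n) : Prop :=
  (∀ p, D.h p x = 0) ∧ (∀ q, 0 ≤ D.g q x) ∧ ((n : ℝ) - D.s ≤ ∑ i, y i) ∧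
  (∀ i, x i * y i = 0) ∧ (∀ i, 0 ≤ y i ∧ y i ≤ 1 + D.ε)

/-- Feasibility for the Scholtes-type regularization S(t). -/
def feasS (D : Setting n P Q) (t : ℝ) (x y : Vec n) : Prop :=
  (∀ p, D.h p x = 0) ∧ (∀ q, 0 ≤ D.g q x) ∧ ((n : ℝ) - D.s ≤ ∑ i, y i) ∧
  (∀ i, -t ≤ x i * y i ∧ x i * y i ≤ t) ∧ (∀ i, 0 ≤ y i ∧ y i ≤ 1 + D.ε)

/-- Multipliers for T-stationarity (defined on the whole index ranges). -/
structure TMult (n : ℕ) (P Q : Type*) where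
  lam : P → ℝ
  mu1 : Q → ℝ
  mu2 : Fin n → ℝ
  mu3 : ℝ
  sig1 : Fin n → ℝ
  sig2 : Fin n → ℝ
  rho1 : Fin n → ℝ
  rho2 : Fin n → ℝ

/-- The T-stationarity equation (1) of Definition 2. -/
def TStatEq (D : Setting n P Q) (x y : Vec n) (M : TMult n P Q) : Prop :=
  ((grad D.f x, D.c) : Vec n × Vec n) =
    (∑ p, M.lam p • ((grad (D.h p) x, (0 : Vec n)) : Vec n × Vec n))
    + (∑ q ∈ Q0 D x, M.mu1 q • ((grad (D.g q) x, (0 : Vec n)) : Vec n × Vec n))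
    - (∑ i ∈ Eact D y, M.mu2 i • ey i)
    + M.mu3 • eAll
    + (∑ i ∈ a01 x y, M.sig1 i • ex i)
    + (∑ i ∈ a10 x y, M.sig2 i • ey i)
    + (∑ i ∈ a00 x y, (M.rho1 i • ex i + M.rho2 i • ey i))

/-- (x,y) is a T-stationary point of R with multipliers M. -/
def TStatAt (D : Setting n P Q) (x y : Vec n) (M : TMult n P Q) : Prop :=
  feasR D x y ∧
  (∀ q ∈ Q0 D x, 0 ≤ M.mu1 q) ∧
  (∀ i ∈ Eact D y, 0 ≤ M.mu2 i) ∧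
  0 ≤ M.mu3 ∧
  M.mu3 * ((∑ i, y i) - ((n : ℝ) - D.s)) = 0 ∧
  (∀ i ∈ a00 x y, M.rho1 i = 0 ∨ M.rho2 i ≤ 0) ∧
  TStatEq D x y M

/-- (x,y) is a T-stationary point of R. -/
def TStat (D : Setting n P Q) (x y : Vec n) : Prop := ∃ M, TStatAt D x y M

/-- MPOC-tailored LICQ at a feasible point (x,y) of R: the indicated family of
vectors in ℝ²ⁿ is linearly independent. -/
def MPOC_LICQ (D : Setting n P Q) (x y : Vec n) : Prop :=
  ∀ (lam : P → ℝ) (mu1 : Q → ℝ) (mu2 : Fin n → ℝ) (mu3 : ℝ) (s1 s2 : Fin n → ℝ),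
    ((∑ i, y i) ≠ (n : ℝ) - D.s → mu3 = 0) →
    (∑ p, lam p • ((grad (D.h p) x, (0 : Vec n)) : Vec n × Vec n))
    + (∑ q ∈ Q0 D x, mu1 q • ((grad (D.g q) x, (0 : Vec n)) : Vec n × Vec n))
    + (∑ i ∈ Eact D y, mu2 i • ey i)
    + mu3 • eAll
    + (∑ i ∈ a01 x y ∪ a00 x y, s1 i • ex i)
    + (∑ i ∈ a10 x y ∪ a00 x y, s2 i • ey i) = 0 →
    (∀ p, lam p = 0) ∧ (∀ q ∈ Q0 D x, mu1 q = 0) ∧ (∀ i ∈ Eact D y, mu2 i = 0) ∧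
    mu3 = 0 ∧ (∀ i ∈ a01 x y ∪ a00 x y, s1 i = 0) ∧ (∀ i ∈ a10 x y ∪ a00 x y, s2 i = 0)

/-- The Lagrange function L^R associated with the T-stationary point (x̄,ȳ)
and multipliers M. -/
def LagR (D : Setting n P Q) (xb yb : Vec n) (M : TMult n P Q) (z : Vec n × Vec n) : ℝ :=
  D.f z.1 + dot D.c z.2
    - (∑ p, M.lam p * D.h p z.1)
    - (∑ q ∈ Q0 D xb, M.mu1 q * D.g q z.1)
    + (∑ i ∈ Eact D yb, M.mu2 i * (z.2 i - (1 + D.ε)))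
    - M.mu3 * ((∑ i, z.2 i) - ((n : ℝ) - D.s))
    - (∑ i ∈ a01 xb yb, M.sig1 i * z.1 i)
    - (∑ i ∈ a10 xb yb, M.sig2 i * z.2 i)
    - (∑ i ∈ a00 xb yb, (M.rho1 i * z.1 i + M.rho2 i * z.2 i))

/-- Membership in the tangent space T^R at (x̄,ȳ). -/
def inTR (D : Setting n P Q) (x y : Vec n) (ξ : Vec n × Vec n) : Prop :=
  (∀ p, dot (grad (D.h p) x) ξ.1 = 0) ∧
  (∀ q ∈ Q0 D x, dot (grad (D.g q) x) ξ.1 = 0) ∧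
  (∀ i ∈ Eact D y, ξ.2 i = 0) ∧
  ((∑ i, y i) = (n : ℝ) - D.s → (∑ i, ξ.2 i) = 0) ∧
  (∀ i ∈ a00 x y ∪ a01 x y, ξ.1 i = 0) ∧
  (∀ i ∈ a00 x y ∪ a10 x y, ξ.2 i = 0)

/-- Nondegenerate T-stationary point with multipliers M (NDT1–NDT4). -/
def NondegTStatAt (D : Setting n P Q) (x y : Vec n) (M : TMult n P Q) : Prop :=
  TStatAt D x y M ∧
  MPOC_LICQ D x y ∧
  (∀ q ∈ Q0 D x, 0 < M.mu1 q) ∧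
  (∀ i ∈ Eact D y, 0 < M.mu2 i) ∧
  ((∑ i, y i) = (n : ℝ) - D.s → 0 < M.mu3) ∧
  (∀ i ∈ a00 x y, M.rho1 i ≠ 0 ∧ M.rho2 i < 0) ∧
  (∀ ξ, inTR D x y ξ → (∀ ζ, inTR D x y ζ → hess (LagR D x y M) (x, y) ξ ζ = 0) → ξ = 0)

/-- T-index: quadratic index (number of negative eigenvalues of the restricted
Hessian of L^R) plus the biactive index |a00|. -/
def TIndex (D : Setting n P Q) (x y : Vec n) (M : TMult n P Q) : ℕ :=
  negIndex (hess (LagR D x y M) (x, y)) (inTR D x y) + (a00 x y).card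

/-- Multipliers for KKT points of S(t) (defined on the whole index ranges). -/
structure SMult (n : ℕ) (P Q : Type*) where
  lam : P → ℝ
  mu1 : Q → ℝ
  mu2 : Fin n → ℝ
  mu3 : ℝ
  etaGe : Fin n → ℝ
  etaLe : Fin n → ℝ
  nu : Fin n → ℝ

/-- The KKT equation for S(t). -/
def KKTEq (D : Setting n P Q) (t : ℝ) (x y : Vec n) (M : SMult n P Q) : Prop :=
  ((grad D.f x, D.c) : Vec n × Vec n) =
    (∑ p, M.lam p • ((grad (D.h p) x, (0 : Vec n)) : Vec n × Vec n))
    + (∑ q ∈ Q0 D x, M.mu1 q • ((grad (D.g q) x, (0 : Vec n)) : Vec n × Vec n))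
    - (∑ i ∈ Eact D y, M.mu2 i • ey i)
    + M.mu3 • eAll
    + (∑ i ∈ Hge t x y, M.etaGe i • hvec x y i)
    - (∑ i ∈ Hle t x y, M.etaLe i • hvec x y i)
    + (∑ i ∈ Nact y, M.nu i • ey i)

/-- (x,y) is a KKT point of S(t) with multipliers M. -/
def KKTAt (D : Setting n P Q) (t : ℝ) (x y : Vec n) (M : SMult n P Q) : Prop :=
  feasS D t x y ∧
  (∀ q ∈ Q0 D x, 0 ≤ M.mu1 q) ∧
  (∀ i ∈ Eact D y, 0 ≤ M.mu2 i) ∧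
  0 ≤ M.mu3 ∧
  M.mu3 * ((∑ i, y i) - ((n : ℝ) - D.s)) = 0 ∧
  (∀ i ∈ Hge t x y, 0 ≤ M.etaGe i) ∧
  (∀ i ∈ Hle t x y, 0 ≤ M.etaLe i) ∧
  (∀ i ∈ Nact y, 0 ≤ M.nu i) ∧
  KKTEq D t x y M

/-- (x,y) is a KKT point of S(t). -/
def KKT (D : Setting n P Q) (t : ℝ) (x y : Vec n) : Prop := ∃ M, KKTAt D t x y M

/-- LICQ at a feasible point (x,y) of S(t). -/
def LICQ (D : Setting n P Q) (t : ℝ) (x y : Vec n) : Prop :=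
  ∀ (lam : P → ℝ) (mu1 : Q → ℝ) (mu2 : Fin n → ℝ) (mu3 : ℝ) (eta nu : Fin n → ℝ),
    ((∑ i, y i) ≠ (n : ℝ) - D.s → mu3 = 0) →
    (∑ p, lam p • ((grad (D.h p) x, (0 : Vec n)) : Vec n × Vec n))
    + (∑ q ∈ Q0 D x, mu1 q • ((grad (D.g q) x, (0 : Vec n)) : Vec n × Vec n))
    + (∑ i ∈ Eact D y, mu2 i • ey i)
    + mu3 • eAll
    + (∑ i ∈ Hact t x y, eta i • hvec x y i)
    + (∑ i ∈ Nact y, nu i • ey i) = 0 →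
    (∀ p, lam p = 0) ∧ (∀ q ∈ Q0 D x, mu1 q = 0) ∧ (∀ i ∈ Eact D y, mu2 i = 0) ∧
    mu3 = 0 ∧ (∀ i ∈ Hact t x y, eta i = 0) ∧ (∀ i ∈ Nact y, nu i = 0)

/-- The Lagrange function L^S associated with the KKT point (x̄,ȳ) of S(t)
and multipliers M. -/
def LagS (D : Setting n P Q) (t : ℝ) (xb yb : Vec n) (M : SMult n P Q)
    (z : Vec n × Vec n) : ℝ :=
  D.f z.1 + dot D.c z.2
    - (∑ p, M.lam p * D.h p z.1)
    - (∑ q ∈ Q0 D xb, M.mu1 q * D.g q z.1)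
    + (∑ i ∈ Eact D yb, M.mu2 i * (z.2 i - (1 + D.ε)))
    - M.mu3 * ((∑ i, z.2 i) - ((n : ℝ) - D.s))
    - (∑ i ∈ Hge t xb yb, M.etaGe i * (z.1 i * z.2 i + t))
    + (∑ i ∈ Hle t xb yb, M.etaLe i * (z.1 i * z.2 i - t))
    - (∑ i ∈ Nact yb, M.nu i * z.2 i)

/-- Membership in the tangent space T^S at (x,y) for S(t). -/
def inTS (D : Setting n P Q) (t : ℝ) (x y : Vec n) (ξ : Vec n × Vec n) : Prop :=
  (∀ p, dot (grad (D.h p) x) ξ.1 = 0) ∧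
  (∀ q ∈ Q0 D x, dot (grad (D.g q) x) ξ.1 = 0) ∧
  (∀ i ∈ Eact D y, ξ.2 i = 0) ∧
  ((∑ i, y i) = (n : ℝ) - D.s → (∑ i, ξ.2 i) = 0) ∧
  (∀ i ∈ Hact t x y, y i * ξ.1 i + x i * ξ.2 i = 0) ∧
  (∀ i ∈ Nact y, ξ.2 i = 0)

/-- Nondegenerate KKT point of S(t) with multipliers M (ND1–ND3). -/
def NondegKKTAt (D : Setting n P Q) (t : ℝ) (x y : Vec n) (M : SMult n P Q) : Prop :=
  KKTAt D t x y M ∧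
  LICQ D t x y ∧
  (∀ q ∈ Q0 D x, 0 < M.mu1 q) ∧
  (∀ i ∈ Eact D y, 0 < M.mu2 i) ∧
  (∀ i ∈ Hge t x y, 0 < M.etaGe i) ∧
  (∀ i ∈ Hle t x y, 0 < M.etaLe i) ∧
  (∀ i ∈ Nact y, 0 < M.nu i) ∧
  ((∑ i, y i) = (n : ℝ) - D.s → 0 < M.mu3) ∧
  (∀ ξ, inTS D t x y ξ → (∀ ζ, inTS D t x y ζ → hess (LagS D t x y M) (x, y) ξ ζ = 0) → ξ = 0)

/-- Quadratic index of a KKT point of S(t): number of negative eigenvalues of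
the restricted Hessian of L^S. -/
def QIdx (D : Setting n P Q) (t : ℝ) (x y : Vec n) (M : SMult n P Q) : ℕ :=
  negIndex (hess (LagS D t x y M) (x, y)) (inTS D t x y)

end Scholtes

/-!
Reduce the KKT multipliers of `S(t_k)` to coefficients of the generators `(e_i, 0)` and
`(0, e_i)`, merging the multipliers of `±x_i y_i ≤ t` and `y_i ≥ 0`. The complementarity
relations they satisfy survive limits, so MPOC-LICQ at `(x̄, ȳ)` makes them bounded: a normalized
unbounded sequence would converge to a nonzero combination of the generators that vanishes.
Along a subsequence violating the claim the multipliers then converge.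

If `y^k_i = 0` infinitely often with `i ∉ a10`, then `i ∈ a00`, and by LICQ the limit is the
T-multiplier, so `ϱ₂_i < 0` would be a limit of the nonnegative multipliers of `y_i ≥ 0`.
If `i ∈ a10` lies outside `N(y^k) ∪ H(x^k, y^k)` infinitely often, the `y_i`-row of the KKT
equation reads `c_i = μ₃`, so `∑ ȳ = n - s`. Since `ε ≤ 1/(n - s)` this sum cannot consist of
entries `1 + ε` only, so some `j ∈ a01` has `ȳ_j < 1 + ε`, and the `y_j`-row in the limit gives
`c_j = μ₃ = c_i`, contradicting injectivity of `c`.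
-/

namespace Scholtes

lemma sum_smul_eq_sum_univ {ι E : Type*} [Fintype ι] [AddCommMonoid E] [Module ℝ E]
    {s : Finset ι} {c : ι → ℝ} (v : ι → E) (hc : ∀ i ∉ s, c i = 0) :
    ∑ i ∈ s, c i • v i = ∑ i, c i • v i :=
  Finset.sum_subset (Finset.subset_univ s) fun i _ hi => by rw [hc i hi, zero_smul]

lemma sum_ite_smul {ι E : Type*} [Fintype ι] [AddCommMonoid E] [Module ℝ E]
    (s : Finset ι) [DecidablePred (· ∈ s)] (c : ι → ℝ) (v : ι → E) :
    ∑ i, (if i ∈ s then c i else 0) • v i = ∑ i ∈ s, c i • v i := by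
  simp [ite_smul]

lemma natCast_mul_one_add_ne {A m : ℕ} {ε : ℝ} (hm : 0 < m) (hε : 0 < ε) (hεm : ε * m ≤ 1) :
    (A : ℝ) * (1 + ε) ≠ m := by
  intro h
  have hm' : (0 : ℝ) < m := by exact_mod_cast hm
  rcases le_or_gt m A with hA | hA
  · have : (m : ℝ) ≤ A := by exact_mod_cast hA
    nlinarith
  · have : (A : ℝ) + 1 ≤ m := by exact_mod_cast hA
    nlinarith

section Multipliers

variable {n : ℕ} {P Q : Type*}

/-- Multipliers `(λ, μ₁, μ₂, μ₃, coefX, coefY)`, where `coefX i`, `coefY i` are the coefficients of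
`(e_i, 0)`, `(0, e_i)`: a multiplier `η` of `x_i y_i` contributes `η (y_i e_i, x_i e_i)`. -/
abbrev Mult (n : ℕ) (P Q : Type*) : Type _ :=
  (P → ℝ) × (Q → ℝ) × (Fin n → ℝ) × ℝ × (Fin n → ℝ) × (Fin n → ℝ)

namespace Mult

variable (L : Mult n P Q)

def lam : P → ℝ := L.1
def mu1 : Q → ℝ := L.2.1
def mu2 : Fin n → ℝ := L.2.2.1
def mu3 : ℝ := L.2.2.2.1
def coefX : Fin n → ℝ := L.2.2.2.2.1
def coefY : Fin n → ℝ := L.2.2.2.2.2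

lemma ext {L L' : Mult n P Q} (h1 : L.lam = L'.lam) (h2 : L.mu1 = L'.mu1) (h3 : L.mu2 = L'.mu2)
    (h4 : L.mu3 = L'.mu3) (h5 : L.coefX = L'.coefX) (h6 : L.coefY = L'.coefY) : L = L' :=
  Prod.ext h1 (Prod.ext h2 (Prod.ext h3 (Prod.ext h4 (Prod.ext h5 h6))))

variable {ι : Type*} {l : Filter ι} {L : ι → Mult n P Q} {Lb : Mult n P Q}

lemma tendsto_mu1 (hL : Tendsto L l (𝓝 Lb)) (q : Q) :
    Tendsto (fun k => (L k).mu1 q) l (𝓝 (Lb.mu1 q)) :=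
  tendsto_pi_nhds.1 hL.snd_nhds.fst_nhds q

lemma tendsto_mu2 (hL : Tendsto L l (𝓝 Lb)) (i : Fin n) :
    Tendsto (fun k => (L k).mu2 i) l (𝓝 (Lb.mu2 i)) :=
  tendsto_pi_nhds.1 hL.snd_nhds.snd_nhds.fst_nhds i

lemma tendsto_mu3 (hL : Tendsto L l (𝓝 Lb)) : Tendsto (fun k => (L k).mu3) l (𝓝 Lb.mu3) :=
  hL.snd_nhds.snd_nhds.snd_nhds.fst_nhds

lemma tendsto_coefX (hL : Tendsto L l (𝓝 Lb)) (i : Fin n) :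
    Tendsto (fun k => (L k).coefX i) l (𝓝 (Lb.coefX i)) :=
  tendsto_pi_nhds.1 hL.snd_nhds.snd_nhds.snd_nhds.snd_nhds.fst_nhds i

lemma tendsto_coefY (hL : Tendsto L l (𝓝 Lb)) (i : Fin n) :
    Tendsto (fun k => (L k).coefY i) l (𝓝 (Lb.coefY i)) :=
  tendsto_pi_nhds.1 hL.snd_nhds.snd_nhds.snd_nhds.snd_nhds.snd_nhds i

end Mult

end Multipliers

variable {n : ℕ} {P Q : Type*} [Fintype P] [Fintype Q]

lemma continuous_grad {f : Vec n → ℝ} (hf : ContDiff ℝ 2 f) : Continuous (grad f) :=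
  continuous_pi fun i => (hf.continuous_fderiv (by norm_num)).clm_apply continuous_const

def gradComb (D : Setting n P Q) (x : Vec n) : Mult n P Q →ₗ[ℝ] Vec n × Vec n where
  toFun L := (∑ p, L.lam p • ((grad (D.h p) x, 0) : Vec n × Vec n))
    + (∑ q, L.mu1 q • ((grad (D.g q) x, 0) : Vec n × Vec n))
    - (∑ i, L.mu2 i • ey i)
    + L.mu3 • eAll
    + (∑ i, L.coefX i • ex i)
    + (∑ i, L.coefY i • ey i)
  map_add' L L' := by
    simp only [Mult.lam, Mult.mu1, Mult.mu2, Mult.mu3, Mult.coefX, Mult.coefY, Prod.fst_add,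
      Prod.snd_add, Pi.add_apply, add_smul, Finset.sum_add_distrib]
    abel
  map_smul' r L := by
    simp only [Mult.lam, Mult.mu1, Mult.mu2, Mult.mu3, Mult.coefX, Mult.coefY, Prod.smul_fst,
      Prod.smul_snd, Pi.smul_apply, smul_eq_mul, mul_smul, ← Finset.smul_sum, RingHom.id_apply,
      smul_add, smul_sub]

lemma continuous_gradComb (D : Setting n P Q) :
    Continuous fun z : Vec n × Mult n P Q => gradComb D z.1 z.2 := by
  have hh := fun p => continuous_grad (D.hh p)
  have hg := fun q => continuous_grad (D.hg q)
  simp only [gradComb, LinearMap.coe_mk, AddHom.coe_mk, Mult.lam, Mult.mu1, Mult.mu2, Mult.mu3,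
    Mult.coefX, Mult.coefY]
  fun_prop

lemma gradComb_snd_apply (D : Setting n P Q) (x : Vec n) (L : Mult n P Q) (i : Fin n) :
    (gradComb D x L).2 i = -L.mu2 i + L.mu3 + L.coefY i := by
  simp [gradComb, ey, eAll, ex, Prod.snd_sum, Finset.sum_apply, Pi.single_apply]

/-- The part of the complementarity conditions that is linear and closed under limits. -/
def admissibleMult (D : Setting n P Q) (x y : Vec n) : Submodule ℝ (Mult n P Q) where
  carrier := {L | (∀ q, D.g q x ≠ 0 → L.mu1 q = 0) ∧ (∀ i, y i ≠ 1 + D.ε → L.mu2 i = 0) ∧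
    ((∑ i, y i) ≠ (n : ℝ) - D.s → L.mu3 = 0) ∧ ∀ i, L.coefX i * x i = L.coefY i * y i}
  zero_mem' :=
    ⟨fun _ _ => rfl, fun _ _ => rfl, fun _ => rfl, fun _ => by simp [Mult.coefX, Mult.coefY]⟩
  add_mem' := by
    rintro L L' ⟨h1, h2, h3, h4⟩ ⟨h1', h2', h3', h4'⟩
    refine ⟨fun q hq => ?_, fun i hi => ?_, fun hs => ?_, fun i => ?_⟩
    · show L.mu1 q + L'.mu1 q = 0
      rw [h1 q hq, h1' q hq, add_zero]
    · show L.mu2 i + L'.mu2 i = 0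
      rw [h2 i hi, h2' i hi, add_zero]
    · show L.mu3 + L'.mu3 = 0
      rw [h3 hs, h3' hs, add_zero]
    · show (L.coefX i + L'.coefX i) * x i = (L.coefY i + L'.coefY i) * y i
      rw [add_mul, add_mul, h4, h4']
  smul_mem' := by
    rintro r L ⟨h1, h2, h3, h4⟩
    refine ⟨fun q hq => ?_, fun i hi => ?_, fun hs => ?_, fun i => ?_⟩
    · show r * L.mu1 q = 0
      rw [h1 q hq, mul_zero]
    · show r * L.mu2 i = 0
      rw [h2 i hi, mul_zero]
    · show r * L.mu3 = 0
      rw [h3 hs, mul_zero]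
    · show r * L.coefX i * x i = r * L.coefY i * y i
      rw [mul_assoc, mul_assoc, h4]

lemma mem_a01_union_a00 {D : Setting n P Q} {x y : Vec n} (hfeas : feasR D x y) {i : Fin n} :
    i ∈ a01 x y ∪ a00 x y ↔ x i = 0 := by
  simp only [a01, a00, Finset.mem_union, Finset.mem_filter, Finset.mem_univ, true_and]
  rcases (hfeas.2.2.2.2 i).1.lt_or_eq with hy | hy
  · simp [hy, hy.ne']
  · simp [← hy]

lemma mem_a10_union_a00 {x y : Vec n} {i : Fin n} : i ∈ a10 x y ∪ a00 x y ↔ y i = 0 := by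
  simp only [a10, a00, Finset.mem_union, Finset.mem_filter, Finset.mem_univ, true_and]
  tauto

theorem eq_zero_of_gradComb_eq_zero {D : Setting n P Q} {x y : Vec n}
    (hfeas : feasR D x y) (hlicq : MPOC_LICQ D x y) {L : Mult n P Q}
    (hL : L ∈ admissibleMult D x y) (h0 : gradComb D x L = 0) : L = 0 := by
  obtain ⟨h1, h2, h3, h4⟩ := hL
  have hQ : ∀ q ∉ Q0 D x, L.mu1 q = 0 := fun q hq => h1 q (by simpa [Q0] using hq)
  have hE : ∀ i ∉ Eact D y, -L.mu2 i = 0 := fun i hi => by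
    rw [h2 i (by simpa [Eact] using hi), neg_zero]
  have hX : ∀ i ∉ a01 x y ∪ a00 x y, L.coefX i = 0 := fun i hi => by
    have hx : x i ≠ 0 := fun h => hi ((mem_a01_union_a00 hfeas).2 h)
    have hy : y i = 0 := (mul_eq_zero.1 (hfeas.2.2.2.1 i)).resolve_left hx
    simpa [hy, hx] using h4 i
  have hY : ∀ i ∉ a10 x y ∪ a00 x y, L.coefY i = 0 := fun i hi => by
    have hy : y i ≠ 0 := fun h => hi (mem_a10_union_a00.2 h)
    have hx : x i = 0 := (mul_eq_zero.1 (hfeas.2.2.2.1 i)).resolve_right hy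
    simpa [hy, hx] using (h4 i).symm
  obtain ⟨c1, c2, c3, c4, c5, c6⟩ :=
    hlicq L.lam L.mu1 (-L.mu2) L.mu3 L.coefX L.coefY h3 (by
      rw [sum_smul_eq_sum_univ _ hQ, sum_smul_eq_sum_univ (c := -L.mu2) _ hE,
        sum_smul_eq_sum_univ _ hX, sum_smul_eq_sum_univ _ hY, ← h0]
      simp only [gradComb, LinearMap.coe_mk, AddHom.coe_mk, Pi.neg_apply, neg_smul,
        Finset.sum_neg_distrib, ← sub_eq_add_neg])
  refine Mult.ext (funext c1) (funext fun q => ?_) (funext fun i => ?_) c4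
    (funext fun i => ?_) (funext fun i => ?_)
  · by_cases hq : q ∈ Q0 D x
    exacts [c2 q hq, hQ q hq]
  · by_cases hi : i ∈ Eact D y
    exacts [neg_eq_zero.1 (c3 i hi), neg_eq_zero.1 (hE i hi)]
  · by_cases hi : i ∈ a01 x y ∪ a00 x y
    exacts [c5 i hi, hX i hi]
  · by_cases hi : i ∈ a10 x y ∪ a00 x y
    exacts [c6 i hi, hY i hi]

lemma hvec_eq (x y : Vec n) (i : Fin n) : hvec x y i = y i • ex i + x i • ey i := by
  ext j <;> simp [hvec, ex, ey, Pi.single_apply]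

/-- `η` is the signed multiplier of the constraint function `x_i y_i`. -/
def kktMult (D : Setting n P Q) (t : ℝ) (x y : Vec n) (M : SMult n P Q) : Mult n P Q :=
  let η i := (if i ∈ Hge t x y then M.etaGe i else 0) - (if i ∈ Hle t x y then M.etaLe i else 0)
  (M.lam, fun q => if q ∈ Q0 D x then M.mu1 q else 0, fun i => if i ∈ Eact D y then M.mu2 i else 0,
    M.mu3, fun i => η i * y i, fun i => η i * x i + if i ∈ Nact y then M.nu i else 0)

lemma gradComb_kktMult {D : Setting n P Q} {t : ℝ} {x y : Vec n} {M : SMult n P Q}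
    (h : KKTEq D t x y M) : gradComb D x (kktMult D t x y M) = (grad D.f x, D.c) := by
  rw [h]
  simp only [gradComb, kktMult, LinearMap.coe_mk, AddHom.coe_mk, Mult.lam, Mult.mu1, Mult.mu2,
    Mult.mu3, Mult.coefX, Mult.coefY, sum_ite_smul, add_smul, Finset.sum_add_distrib, mul_smul,
    sub_smul, Finset.sum_sub_distrib, hvec_eq, smul_add]
  simp only [← sum_ite_smul (Hge t x y), ← sum_ite_smul (Hle t x y)]
  abel

section KKT

variable {D : Setting n P Q} {t : ℝ} {x y : Vec n} {M : SMult n P Q}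

lemma kktMult_mem_admissibleMult (hM : KKTAt D t x y M) :
    kktMult D t x y M ∈ admissibleMult D x y := by
  refine ⟨fun q hq => ?_, fun i hi => ?_, fun hs => ?_, fun i => ?_⟩
  · simp [kktMult, Mult.mu1, Q0, hq]
  · simp [kktMult, Mult.mu2, Eact, hi]
  · exact (mul_eq_zero.1 hM.2.2.2.2.1).resolve_right (sub_ne_zero.2 hs)
  · have hν : (if i ∈ Nact y then M.nu i else 0) * y i = 0 := by
      by_cases hy : y i = 0 <;> simp [hy, Nact]
    simp only [kktMult, Mult.coefX, Mult.coefY, add_mul, hν]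
    ring

lemma kktMult_coefY_nonneg (ht : t ≠ 0) (hM : KKTAt D t x y M) {i : Fin n} (hi : i ∈ Nact y) :
    0 ≤ (kktMult D t x y M).coefY i := by
  have hy : y i = 0 := (Finset.mem_filter.1 hi).2
  have hge : i ∉ Hge t x y := by simp [Hge, hy, ht]
  have hle : i ∉ Hle t x y := by simp [Hle, hy, ht.symm]
  simpa [kktMult, Mult.coefY, hge, hle, hi] using hM.2.2.2.2.2.2.2.1 i hi

lemma kktMult_coefY_eq_zero {i : Fin n} (hi : i ∉ Nact y ∪ Hact t x y) :
    (kktMult D t x y M).coefY i = 0 := by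
  simp only [Hact, Finset.mem_union, not_or] at hi
  simp [kktMult, Mult.coefY, hi]

end KKT

section TStat

variable {D : Setting n P Q} {x y : Vec n} {M : TMult n P Q}

def tstatMult (D : Setting n P Q) (x y : Vec n) (M : TMult n P Q) : Mult n P Q :=
  (M.lam, fun q => if q ∈ Q0 D x then M.mu1 q else 0, fun i => if i ∈ Eact D y then M.mu2 i else 0,
    M.mu3, fun i => (if i ∈ a01 x y then M.sig1 i else 0) + (if i ∈ a00 x y then M.rho1 i else 0),
    fun i => (if i ∈ a10 x y then M.sig2 i else 0) + (if i ∈ a00 x y then M.rho2 i else 0))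

lemma gradComb_tstatMult (h : TStatEq D x y M) :
    gradComb D x (tstatMult D x y M) = (grad D.f x, D.c) := by
  rw [h]
  simp only [gradComb, tstatMult, LinearMap.coe_mk, AddHom.coe_mk, Mult.lam, Mult.mu1, Mult.mu2,
    Mult.mu3, Mult.coefX, Mult.coefY, sum_ite_smul, add_smul, Finset.sum_add_distrib]
  abel

lemma tstatMult_mem_admissibleMult (hM : TStatAt D x y M) :
    tstatMult D x y M ∈ admissibleMult D x y := by
  refine ⟨fun q hq => ?_, fun i hi => ?_, fun hs => ?_, fun i => ?_⟩
  · simp [tstatMult, Mult.mu1, Q0, hq]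
  · simp [tstatMult, Mult.mu2, Eact, hi]
  · exact (mul_eq_zero.1 hM.2.2.2.2.1).resolve_right (sub_ne_zero.2 hs)
  · by_cases hx : x i = 0 <;> by_cases hy : y i = 0 <;>
      simp [tstatMult, Mult.coefX, Mult.coefY, a01, a10, a00, hx, hy]

lemma tstatMult_coefY_of_mem_a00 {i : Fin n} (hi : i ∈ a00 x y) :
    (tstatMult D x y M).coefY i = M.rho2 i := by
  have : i ∉ a10 x y := by simp_all [a10, a00]
  simp [tstatMult, Mult.coefY, hi, this]

end TStat

section Limits

variable {D : Setting n P Q} {xb yb : Vec n} {ι : Type*} {l : Filter ι} [l.NeBot]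
  {X : ι → Vec n} {L : ι → Mult n P Q} {Lb : Mult n P Q}

lemma mem_admissibleMult_of_tendsto {Y : ι → Vec n} (hX : Tendsto X l (𝓝 xb))
    (hY : Tendsto Y l (𝓝 yb)) (hL : Tendsto L l (𝓝 Lb))
    (hadm : ∀ k, L k ∈ admissibleMult D (X k) (Y k)) :
    Lb ∈ admissibleMult D xb yb := by
  have hXi := tendsto_pi_nhds.1 hX
  have hYi := tendsto_pi_nhds.1 hY
  have lim_eq_zero : ∀ {u : ι → ℝ} {c : ℝ}, Tendsto u l (𝓝 c) → (∀ᶠ k in l, u k = 0) → c = 0 :=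
    fun hu hev => tendsto_nhds_unique_of_eventuallyEq hu tendsto_const_nhds hev
  refine ⟨fun q hq => ?_, fun i hi => ?_, fun hs => ?_, fun i => ?_⟩
  · refine lim_eq_zero (Mult.tendsto_mu1 hL q) ?_
    filter_upwards [((D.hg q).continuous.tendsto xb).comp hX |>.eventually_ne hq] with k hk
    exact (hadm k).1 q hk
  · refine lim_eq_zero (Mult.tendsto_mu2 hL i) ?_
    filter_upwards [(hYi i).eventually_ne hi] with k hk
    exact (hadm k).2.1 i hk
  · refine lim_eq_zero (Mult.tendsto_mu3 hL) ?_
    filter_upwards [(tendsto_finsetSum _ fun i _ => hYi i).eventually_ne hs] with k hk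
    exact (hadm k).2.2.1 hk
  · exact tendsto_nhds_unique ((Mult.tendsto_coefX hL i).mul (hXi i))
      (((Mult.tendsto_coefY hL i).mul (hYi i)).congr fun k => ((hadm k).2.2.2 i).symm)

lemma gradComb_eq_of_tendsto {v : ι → Vec n × Vec n} {vb : Vec n × Vec n}
    (hX : Tendsto X l (𝓝 xb)) (hL : Tendsto L l (𝓝 Lb)) (hv : Tendsto v l (𝓝 vb))
    (heq : ∀ k, gradComb D (X k) (L k) = v k) : gradComb D xb Lb = vb :=
  tendsto_nhds_unique
    ((((continuous_gradComb D).tendsto (xb, Lb)).comp (hX.prodMk_nhds hL)).congr heq) hv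

end Limits

section Bounded

variable {D : Setting n P Q} {xb yb : Vec n}

theorem exists_eventually_norm_le (hfeas : feasR D xb yb) (hlicq : MPOC_LICQ D xb yb)
    {X Y : ℕ → Vec n} {L : ℕ → Mult n P Q} {v : ℕ → Vec n × Vec n} {vb : Vec n × Vec n}
    (hX : Tendsto X atTop (𝓝 xb)) (hY : Tendsto Y atTop (𝓝 yb)) (hv : Tendsto v atTop (𝓝 vb))
    (hadm : ∀ k, L k ∈ admissibleMult D (X k) (Y k)) (heq : ∀ k, gradComb D (X k) (L k) = v k) :
    ∃ C, ∀ᶠ k in atTop, ‖L k‖ ≤ C := by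
  by_contra! hunb
  obtain ⟨φ, hφ, hbig⟩ := extraction_forall_of_frequently fun j : ℕ => hunb j
  have hpos : ∀ j, 0 < ‖L (φ j)‖ := fun j => (Nat.cast_nonneg j).trans_lt (hbig j)
  set u : ℕ → Mult n P Q := fun j => ‖L (φ j)‖⁻¹ • L (φ j) with hu
  have hu1 : ∀ j, ‖u j‖ = 1 := fun j => by
    rw [hu, norm_smul, norm_inv, norm_norm, inv_mul_cancel₀ (hpos j).ne']
  obtain ⟨ub, -, ψ, hψ, hlim⟩ := tendsto_subseq_of_bounded (x := u) Metric.isBounded_closedBall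
    fun j => mem_closedBall_zero_iff.2 (hu1 j).le
  have hub1 : ‖ub‖ = 1 :=
    tendsto_nhds_unique ((continuous_norm.tendsto ub).comp hlim) (by simp [Function.comp_def, hu1])
  have hσ : Tendsto (φ ∘ ψ) atTop atTop := (hφ.comp hψ).tendsto_atTop
  have hr : Tendsto (fun j => ‖L (φ (ψ j))‖⁻¹) atTop (𝓝 0) :=
    tendsto_inv_atTop_zero.comp <| tendsto_atTop_mono (fun j => (hbig (ψ j)).le)
      (tendsto_natCast_atTop_atTop.comp hψ.tendsto_atTop)
  have hadm_ub : ub ∈ admissibleMult D xb yb :=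
    mem_admissibleMult_of_tendsto (hX.comp hσ) (hY.comp hσ) hlim
      fun j => Submodule.smul_mem _ _ (hadm _)
  have hcomb_ub : gradComb D xb ub = 0 := by
    refine gradComb_eq_of_tendsto (hX.comp hσ) hlim (by simpa using hr.smul (hv.comp hσ))
      fun j => ?_
    simp [hu, heq]
  have := eq_zero_of_gradComb_eq_zero hfeas hlicq hadm_ub hcomb_ub
  simp [this] at hub1

end Bounded

lemma exists_mem_a01_ne_one_add {D : Setting n P Q} {x y : Vec n} (hfeas : feasR D x y)
    (hsum : ∑ i, y i = (n : ℝ) - D.s) : ∃ j ∈ a01 x y, y j ≠ 1 + D.ε := by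
  by_contra! hE
  have hsupp : ∀ i ∉ a01 x y, y i = 0 := fun i hi => by
    rcases (hfeas.2.2.2.2 i).1.lt_or_eq with hy | hy
    · have hx : x i = 0 := (mul_eq_zero.1 (hfeas.2.2.2.1 i)).resolve_right hy.ne'
      exact absurd (Finset.mem_filter.2 ⟨Finset.mem_univ i, hx, hy⟩) hi
    · exact hy.symm
  have hm : ((n - D.s : ℕ) : ℝ) = (n : ℝ) - D.s := by rw [Nat.cast_sub D.hs.le]
  have hεm : D.ε * (n - D.s : ℕ) ≤ 1 := by
    rw [hm, ← le_div_iff₀ (by linarith [(Nat.cast_lt (α := ℝ)).2 D.hs])]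
    exact D.hεle
  refine natCast_mul_one_add_ne (A := (a01 x y).card) (Nat.sub_pos_of_lt D.hs) D.hεpos hεm ?_
  rw [hm, ← hsum, ← Finset.sum_subset (Finset.subset_univ _) fun i _ hi => hsupp i hi,
    Finset.sum_congr rfl hE, Finset.sum_const, nsmul_eq_mul]

section Sequences

variable {D : Setting n P Q} {xb yb : Vec n} {X Y : ℕ → Vec n} {L : ℕ → Mult n P Q}

theorem exists_subseq_tendsto_multiplier (hX : Tendsto X atTop (𝓝 xb))
    (hY : Tendsto Y atTop (𝓝 yb)) (hadm : ∀ k, L k ∈ admissibleMult D (X k) (Y k))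
    (heq : ∀ k, gradComb D (X k) (L k) = (grad D.f (X k), D.c))
    (hbdd : ∃ C, ∀ᶠ k in atTop, ‖L k‖ ≤ C)
    {φ : ℕ → ℕ} (hφ : StrictMono φ) :
    ∃ ψ : ℕ → ℕ, StrictMono ψ ∧ ∃ Lb, Tendsto (fun j => L (φ (ψ j))) atTop (𝓝 Lb) ∧
      Lb ∈ admissibleMult D xb yb ∧ gradComb D xb Lb = (grad D.f xb, D.c) := by
  obtain ⟨C, hC⟩ := hbdd
  obtain ⟨Lb, -, ψ, hψ, hlim⟩ := tendsto_subseq_of_frequently_bounded (x := L ∘ φ)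
    (Metric.isBounded_closedBall (x := 0) (r := C))
    (hφ.tendsto_atTop.eventually (hC.mono fun k hk => mem_closedBall_zero_iff.2 hk)).frequently
  have hσ : Tendsto (φ ∘ ψ) atTop atTop := (hφ.comp hψ).tendsto_atTop
  refine ⟨ψ, hψ, Lb, hlim, mem_admissibleMult_of_tendsto (hX.comp hσ) (hY.comp hσ) hlim
    fun j => hadm _, gradComb_eq_of_tendsto (hX.comp hσ) hlim ?_ fun j => heq _⟩
  exact (((continuous_grad D.hf).tendsto xb).comp (hX.comp hσ)).prodMk_nhds tendsto_const_nhds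

theorem eventually_nact_subset_a10 {Mb : TMult n P Q} (hT : TStatAt D xb yb Mb)
    (hlicq : MPOC_LICQ D xb yb) (hrho : ∀ i ∈ a00 xb yb, Mb.rho2 i < 0)
    (hX : Tendsto X atTop (𝓝 xb)) (hY : Tendsto Y atTop (𝓝 yb))
    (hadm : ∀ k, L k ∈ admissibleMult D (X k) (Y k))
    (heq : ∀ k, gradComb D (X k) (L k) = (grad D.f (X k), D.c))
    (hbdd : ∃ C, ∀ᶠ k in atTop, ‖L k‖ ≤ C)
    (hN : ∀ k, ∀ i ∈ Nact (Y k), 0 ≤ (L k).coefY i) :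
    ∀ᶠ k in atTop, Nact (Y k) ⊆ a10 xb yb := by
  simp only [Finset.subset_iff, eventually_all]
  intro i
  by_contra hfreq
  obtain ⟨φ, hφ, hbad⟩ := extraction_of_frequently_atTop (not_eventually.1 hfreq)
  simp only [Classical.not_imp] at hbad
  obtain ⟨ψ, hψ, Lb, hlim, hLb, hcomb⟩ := exists_subseq_tendsto_multiplier hX hY hadm heq hbdd hφ
  have hLb_eq : Lb = tstatMult D xb yb Mb := sub_eq_zero.1 <|
    eq_zero_of_gradComb_eq_zero hT.1 hlicq (sub_mem hLb (tstatMult_mem_admissibleMult hT))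
      (by rw [map_sub, hcomb, gradComb_tstatMult hT.2.2.2.2.2.2, sub_self])
  have hσ : Tendsto (fun j => φ (ψ j)) atTop atTop := (hφ.comp hψ).tendsto_atTop
  have hyb : yb i = 0 := tendsto_nhds_unique ((tendsto_pi_nhds.1 hY i).comp hσ)
    (tendsto_const_nhds.congr fun j => ((Finset.mem_filter.1 (hbad (ψ j)).1).2).symm)
  have hi : i ∈ a00 xb yb := by
    have := (hbad 0).2
    simp_all [a10, a00]
  have hnonneg : 0 ≤ Lb.coefY i :=
    ge_of_tendsto' (Mult.tendsto_coefY hlim i) fun j => hN _ i (hbad (ψ j)).1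
  rw [hLb_eq, tstatMult_coefY_of_mem_a00 hi] at hnonneg
  exact (hrho i hi).not_ge hnonneg

theorem eventually_a10_subset_nact_union_hact (hfeas : feasR D xb yb) {t : ℕ → ℝ}
    (hX : Tendsto X atTop (𝓝 xb)) (hY : Tendsto Y atTop (𝓝 yb))
    (hadm : ∀ k, L k ∈ admissibleMult D (X k) (Y k))
    (heq : ∀ k, gradComb D (X k) (L k) = (grad D.f (X k), D.c))
    (hbdd : ∃ C, ∀ᶠ k in atTop, ‖L k‖ ≤ C)
    (hH : ∀ k, ∀ i ∉ Nact (Y k) ∪ Hact (t k) (X k) (Y k), (L k).coefY i = 0) :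
    ∀ᶠ k in atTop, a10 xb yb ⊆ Nact (Y k) ∪ Hact (t k) (X k) (Y k) := by
  simp only [Finset.subset_iff, eventually_all]
  intro i hi
  obtain ⟨hxi, hyi⟩ : xb i ≠ 0 ∧ yb i = 0 := by simpa [a10] using hi
  by_contra hfreq
  obtain ⟨φ, hφ, hbad⟩ := extraction_of_frequently_atTop (not_eventually.1 hfreq)
  obtain ⟨ψ, hψ, Lb, hlim, hLb, hcomb⟩ := exists_subseq_tendsto_multiplier hX hY hadm heq hbdd hφ
  have hσ : Tendsto (fun j => φ (ψ j)) atTop atTop := (hφ.comp hψ).tendsto_atTop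
  have hYσ : Tendsto (fun j => Y (φ (ψ j))) atTop (𝓝 yb) := hY.comp hσ
  have hmu3 : ∀ᶠ j in atTop, (L (φ (ψ j))).mu3 = D.c i := by
    have hne : yb i ≠ 1 + D.ε := by rw [hyi]; linarith [D.hεpos]
    filter_upwards [(tendsto_pi_nhds.1 hYσ i).eventually_ne hne] with j hj
    have hrow := congrFun (congrArg Prod.snd (heq (φ (ψ j)))) i
    rw [gradComb_snd_apply, (hadm _).2.1 i hj, hH _ i (hbad (ψ j))] at hrow
    simpa using hrow
  have hsum : ∑ j, yb j = (n : ℝ) - D.s := by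
    refine tendsto_nhds_unique (tendsto_finsetSum _ fun j _ => tendsto_pi_nhds.1 hYσ j)
      (tendsto_const_nhds.congr' ?_)
    filter_upwards [hmu3] with j hj
    by_contra hne
    exact (D.hcpos i).ne' (hj ▸ (hadm _).2.2.1 (Ne.symm hne))
  obtain ⟨j, hj, hjE⟩ := exists_mem_a01_ne_one_add hfeas hsum
  obtain ⟨hxj, hyj⟩ : xb j = 0 ∧ 0 < yb j := by simpa [a01] using hj
  have hLbmu3 : Lb.mu3 = D.c i :=
    tendsto_nhds_unique_of_eventuallyEq (Mult.tendsto_mu3 hlim) tendsto_const_nhds hmu3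
  have hLbY : Lb.coefY j = 0 := by
    have := hLb.2.2.2 j
    rw [hxj, mul_zero] at this
    exact (mul_eq_zero.1 this.symm).resolve_right hyj.ne'
  have hrow := congrFun (congrArg Prod.snd hcomb) j
  rw [gradComb_snd_apply, hLb.2.1 j hjE, hLbmu3, hLbY] at hrow
  have : j = i := D.hcinj (by simp at hrow; linarith)
  exact hxi (this ▸ hxj)

end Sequences

theorem statement13_general {n : ℕ} {P Q : Type*} [Fintype P] [Fintype Q]
    (D : Setting n P Q) (t : ℕ → ℝ) (htpos : ∀ k, 0 < t k)
    (X Y : ℕ → Vec n) (hK : ∀ k, KKT D (t k) (X k) (Y k))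
    (xb yb : Vec n)
    (hconv : Filter.Tendsto (fun k => ((X k, Y k) : Vec n × Vec n))
      Filter.atTop (nhds (xb, yb)))
    (Mb : TMult n P Q) (hnd : NondegTStatAt D xb yb Mb) :
    ∃ K : ℕ, ∀ k ≥ K,
      Nact (Y k) ⊆ a10 xb yb ∧
      a10 xb yb ⊆ Nact (Y k) ∪ Hact (t k) (X k) (Y k) := by
  obtain ⟨hT, hlicq, -, -, -, hrho, -⟩ := hnd
  choose M hM using hK
  set L := fun k => kktMult D (t k) (X k) (Y k) (M k)
  have hX : Tendsto X atTop (𝓝 xb) := (continuous_fst.tendsto _).comp hconv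
  have hY : Tendsto Y atTop (𝓝 yb) := (continuous_snd.tendsto _).comp hconv
  have hadm : ∀ k, L k ∈ admissibleMult D (X k) (Y k) :=
    fun k => kktMult_mem_admissibleMult (hM k)
  have heq : ∀ k, gradComb D (X k) (L k) = (grad D.f (X k), D.c) :=
    fun k => gradComb_kktMult (hM k).2.2.2.2.2.2.2.2
  have hbdd : ∃ C, ∀ᶠ k in atTop, ‖L k‖ ≤ C := exists_eventually_norm_le hT.1 hlicq hX hY
    ((((continuous_grad D.hf).tendsto xb).comp hX).prodMk_nhds tendsto_const_nhds) hadm heq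
  have hN := eventually_nact_subset_a10 hT hlicq (fun i hi => (hrho i hi).2) hX hY hadm heq hbdd
    fun k i hi => kktMult_coefY_nonneg (htpos k).ne' (hM k) hi
  have hH := eventually_a10_subset_nact_union_hact hT.1 hX hY hadm heq hbdd
    fun k i hi => kktMult_coefY_eq_zero hi
  exact eventually_atTop.1 (hN.and hH)

/-- Lemma 3d: if KKT points of S(t_k) converge to a
nondegenerate T-stationary point of R, then eventually
N(y^k) ⊆ a10(x̄,ȳ) ⊆ N(y^k) ∪ H(x^k,y^k). -/
theorem statement13 {n : ℕ} {P Q : Type*} [Fintype P] [Fintype Q]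
    (D : Setting n P Q) (t : ℕ → ℝ) (htpos : ∀ k, 0 < t k)
    (ht0 : Filter.Tendsto t Filter.atTop (nhds 0))
    (X Y : ℕ → Vec n) (hK : ∀ k, KKT D (t k) (X k) (Y k))
    (xb yb : Vec n)
    (hconv : Filter.Tendsto (fun k => ((X k, Y k) : Vec n × Vec n))
      Filter.atTop (nhds (xb, yb)))
    (Mb : TMult n P Q) (hnd : NondegTStatAt D xb yb Mb) :
    ∃ K : ℕ, ∀ k ≥ K,
      Nact (Y k) ⊆ a10 xb yb ∧
      a10 xb yb ⊆ Nact (Y k) ∪ Hact (t k) (X k) (Y k) :=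
  statement13_general D t htpos X Y hK xb yb hconv Mb hnd

end Scholtes
end
end

section
/- Let (x̄,ȳ) be a T-stationary point of the regularized continuous reformulation R with multipliers (λ̄,μ̄,σ̄,ϱ̄). Then the multipliers on the index set a10 do not vanish: σ̄_{2,i} ≠ 0 for all i ∈ a10(x̄,ȳ). -/
open scoped Classical
open Finset Filter Topology

noncomputable section
namespace Scholtes

variable {n : ℕ} {P Q : Type*} [Fintype P] [Fintype Q]

/-!
If `σ̄₂ᵢ = 0` for some `i ∈ a10`, the `yᵢ`-component of the T-stationarity equation reads
`cᵢ = μ̄₃`, so `μ̄₃ > 0` and the cardinality constraint `∑ ȳ = n - s` is active. Since `ȳ` is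
supported on `a01` and bounded by `1 + ε` with `ε ≤ 1 / (n - s)`, some `j ∈ a01` has
`ȳⱼ < 1 + ε`, and its `yⱼ`-component gives `cⱼ = μ̄₃ = cᵢ`. As the `cᵢ` are pairwise different,
`j = i`, contradicting `x̄ⱼ = 0 ≠ x̄ᵢ`.
-/

/-- `k (1 + ε)` jumps over `m` between `k = m - 1` and `k = m`. -/
lemma natCast_mul_one_add_ne_natCast {k m : ℕ} {ε : ℝ} (hm : 0 < m) (hε : 0 < ε)
    (hεm : ε * ((m : ℝ) - 1) < 1) : (k : ℝ) * (1 + ε) ≠ m := by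
  intro heq
  rcases le_or_gt m k with hmk | hkm
  · have hmk' : (m : ℝ) ≤ k := by exact_mod_cast hmk
    have hm' : (0 : ℝ) < m := by exact_mod_cast hm
    nlinarith
  · have hk : (k : ℝ) + 1 ≤ m := by exact_mod_cast hkm
    nlinarith

lemma Setting.eps_mul_lt_one (D : Setting n P Q) : D.ε * ((n - D.s : ℕ) - 1 : ℝ) < 1 := by
  have hm : (1 : ℝ) ≤ (n : ℝ) - D.s := by
    have : (D.s : ℝ) + 1 ≤ n := by exact_mod_cast D.hs
    linarith
  have hεle : D.ε * ((n : ℝ) - D.s) ≤ 1 := by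
    have := D.hεle
    rwa [le_div_iff₀ (by linarith)] at this
  rw [Nat.cast_sub D.hs.le]
  nlinarith [D.hεpos]

lemma feasR.sum_a01 {D : Setting n P Q} {x y : Vec n} (hF : feasR D x y) :
    ∑ j ∈ a01 x y, y j = ∑ j, y j := by
  refine sum_subset (subset_univ _) fun j _ hj => ?_
  obtain ⟨-, -, -, hxy, hbox⟩ := hF
  simp only [a01, mem_filter, mem_univ, true_and, not_and, not_lt] at hj
  rcases mul_eq_zero.mp (hxy j) with hx | hy
  · exact le_antisymm (hj hx) (hbox j).1
  · exact hy

lemma feasR.exists_mem_a01_not_mem_Eact {D : Setting n P Q} {x y : Vec n} (hF : feasR D x y)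
    (hsum : ∑ j, y j = (n : ℝ) - D.s) : ∃ j ∈ a01 x y, j ∉ Eact D y := by
  by_contra! hall
  have hcard : ((a01 x y).card : ℝ) * (1 + D.ε) = (n - D.s : ℕ) := by
    rw [Nat.cast_sub D.hs.le, ← hsum, ← hF.sum_a01, ← nsmul_eq_mul, ← sum_const]
    exact sum_congr rfl fun j hj => (mem_filter.mp (hall j hj)).2.symm
  exact natCast_mul_one_add_ne_natCast (Nat.sub_pos_of_lt D.hs) D.hεpos D.eps_mul_lt_one hcard

lemma TStatEq.c_apply {D : Setting n P Q} {x y : Vec n} {M : TMult n P Q}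
    (hE : TStatEq D x y M) (j : Fin n) :
    D.c j = -(if j ∈ Eact D y then M.mu2 j else 0) + M.mu3
      + (if j ∈ a10 x y then M.sig2 j else 0) + (if j ∈ a00 x y then M.rho2 j else 0) := by
  have h := congrArg (fun v : Vec n × Vec n => v.2 j) hE
  simp only [ex, ey, eAll, Prod.snd_add, Prod.snd_sub, Prod.snd_sum, Prod.smul_snd,
    Pi.add_apply, Pi.sub_apply, Finset.sum_apply, Pi.smul_apply, smul_eq_mul, Pi.zero_apply,
    mul_zero, sum_const_zero, zero_add, add_zero, mul_one, Pi.single_apply, mul_ite,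
    sum_ite_eq] at h
  linarith

lemma TStatEq.c_eq_mu3 {D : Setting n P Q} {x y : Vec n} {M : TMult n P Q}
    (hE : TStatEq D x y M) {j : Fin n} (hjE : j ∉ Eact D y) (hj00 : j ∉ a00 x y)
    (hj10 : j ∈ a10 x y → M.sig2 j = 0) : D.c j = M.mu3 := by
  rw [hE.c_apply j, if_neg hjE, if_neg hj00]
  split_ifs with h
  · rw [hj10 h]; ring
  · ring

/-- the σ̄₂-multipliers of any T-stationary point of R do not
vanish on a10(x̄,ȳ). -/
theorem statement17 {n : ℕ} {P Q : Type*} [Fintype P] [Fintype Q]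
    (D : Setting n P Q) (x y : Vec n) (M : TMult n P Q)
    (hT : TStatAt D x y M) :
    ∀ i ∈ a10 x y, M.sig2 i ≠ 0 := by
  intro i hi hsig
  obtain ⟨hF, -, -, -, hcompl, -, hE⟩ := hT
  have hi' : x i ≠ 0 ∧ y i = 0 := by simpa [a10] using hi
  have hci : D.c i = M.mu3 := hE.c_eq_mu3
    (by simp [Eact, hi'.2, (add_pos one_pos D.hεpos).ne]) (by simp [a00, hi'.1])
    fun _ => hsig
  have hsum : ∑ j, y j = (n : ℝ) - D.s := by
    have := (mul_eq_zero.mp hcompl).resolve_left (hci ▸ D.hcpos i).ne'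
    linarith
  obtain ⟨j, hj, hjE⟩ := hF.exists_mem_a01_not_mem_Eact hsum
  have hj' : x j = 0 ∧ 0 < y j := by simpa [a01] using hj
  have hcj : D.c j = M.mu3 := hE.c_eq_mu3 hjE (by simp [a00, hj'.2.ne'])
    fun h => absurd hj'.1 (mem_filter.mp h).2.1
  exact hi'.1 (D.hcinj (hcj.trans hci.symm) ▸ hj'.1)

end Scholtes
end
end
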